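/- Let H be a real Hilbert space, K ⊆ H closed nonempty and r-prox-regular, ρ ∈ (0, r), and p in the ρ-enlargement K_ρ = { y : ∃x ∈ K, ‖x − y‖ < ρ }. Let x̄ = proj_K(p) (the unique nearest point). Then for all x ∈ K: ‖x − p‖² ≥ (1 − ρ/r)‖x − x̄‖² + ‖p − x̄‖². -/
import Mathlib


open Filter Topology
open scoped RealInnerProductSpace Classical

variable {H : Type*} [NormedAddCommGroup H] [InnerProductSpace ℝ H] [CompleteSpace H]

/-- Second-order difference quotient of `j` at `x` for `g` with step `t` and direction `w`. -/
noncomputable def secondQuotH (j : H → EReal) (x g : H) (t : ℝ) (w : H) : EReal :=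
  ((2 / t ^ 2 : ℝ) : EReal) * (j (x + t • w) - j x - ((t * ⟪g, w⟫ : ℝ) : EReal))

/-- Weak convergence of a sequence in the Hilbert space `H`. -/
def WeakTendstoH (z : ℕ → H) (z₀ : H) : Prop :=
  ∀ w : H, Tendsto (fun n => ⟪z n, w⟫) atTop (nhds ⟪z₀, w⟫)

/-- The weak second subderivative of `j` at `x` for `g`. -/
noncomputable def QsubH (j : H → EReal) (x g z : H) : EReal :=
  sInf { L | ∃ (t : ℕ → ℝ) (zs : ℕ → H),
      (∀ n, 0 < t n) ∧ Tendsto t atTop (nhds 0) ∧ WeakTendstoH zs z ∧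
      L = Filter.liminf (fun n => secondQuotH j x g (t n) (zs n)) atTop }

/-- The indicator function of a set, with values in `EReal`. -/
noncomputable def indicatorE (K : Set H) : H → EReal := fun y => if y ∈ K then 0 else ⊤

/-- The tangent cone `T_K(x) = cl(ℝ⁺ (K - x))`. -/
def tangentConeH (K : Set H) (x : H) : Set H :=
  closure { z : H | ∃ c : ℝ, 0 ≤ c ∧ ∃ k ∈ K, z = c • (k - x) }

/-- The second-order tangent set `T²_K(x, z)`. -/
def secondTangentH (K : Set H) (x z : H) : Set H :=
  { r : H | Tendsto (fun t : ℝ => Metric.infDist (x + t • z + (t ^ 2 / 2) • r) K / t ^ 2)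
      (nhdsWithin 0 (Set.Ioi 0)) (nhds 0) }

/-- The proximal normal cone condition: `v ∈ N^P_K(x̄)`. -/
def ProxNormal (K : Set H) (xb v : H) : Prop :=
  ∃ l : ℝ, 0 ≤ l ∧ ∃ y : H, (xb ∈ K ∧ ∀ k ∈ K, ‖xb - y‖ ≤ ‖k - y‖) ∧ v = l • (y - xb)

/-- `K` is `r`-prox-regular. -/
def ProxRegular (r : ℝ) (K : Set H) : Prop :=
  ∀ xb ∈ K, ∀ x ∈ K, ∀ v : H, ProxNormal K xb v →
    r * ⟪v, x - xb⟫ ≤ (1 / 2) * ‖v‖ * ‖x - xb‖ ^ 2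

/-- Strong second-order epi-differentiability of `j` at `x` for `g`. -/
def StrongTwiceEpiH (j : H → EReal) (x g : H) : Prop :=
  ∀ z : H, ∀ t : ℕ → ℝ, (∀ n, 0 < t n) → Tendsto t atTop (nhds 0) →
    ∃ zs : ℕ → H, Tendsto zs atTop (nhds z) ∧
      Tendsto (fun n => secondQuotH j x g (t n) (zs n)) atTop (nhds (QsubH j x g z))

/-- for an `r`-prox-regular set `K`, `ρ ∈ (0,r)`, `p` in the `ρ`-enlargement
of `K` and `x̄ = proj_K(p)`, one has `‖x − p‖² ≥ (1 − ρ/r)‖x − x̄‖² + ‖p − x̄‖²`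
for all `x ∈ K`. -/
theorem proxRegular_projection_estimate (K : Set H) (hKcl : IsClosed K) (hKne : K.Nonempty)
    (r : ℝ) (hr : 0 < r) (hreg : ProxRegular r K)
    (ρ : ℝ) (hρ0 : 0 < ρ) (hρr : ρ < r)
    (p : H) (hp : ∃ x ∈ K, ‖x - p‖ < ρ)
    (xb : H) (hxb : xb ∈ K) (hproj : ∀ k ∈ K, ‖xb - p‖ ≤ ‖k - p‖) :
    ∀ x ∈ K, (1 - ρ / r) * ‖x - xb‖ ^ 2 + ‖p - xb‖ ^ 2 ≤ ‖x - p‖ ^ 2 := by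
  intro x hx
  have hv : ProxNormal K xb (p - xb) :=
    ⟨1, zero_le_one, p, ⟨hxb, hproj⟩, (one_smul ℝ _).symm⟩
  have hprx := hreg xb hxb x hx (p - xb) hv
  obtain ⟨x₀, hx₀, hx₀ρ⟩ := hp
  have hvρ : ‖p - xb‖ ≤ ρ := by
    calc ‖p - xb‖ = ‖xb - p‖ := norm_sub_rev _ _
    _ ≤ ‖x₀ - p‖ := hproj x₀ hx₀
    _ ≤ ρ := hx₀ρ.le
  have key : ‖x - p‖ ^ 2 = ‖x - xb‖ ^ 2 - 2 * ⟪p - xb, x - xb⟫ + ‖p - xb‖ ^ 2 := by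
    have : x - p = (x - xb) - (p - xb) := by abel
    rw [this, @norm_sub_sq_real, real_inner_comm]
  have hn : (0:ℝ) ≤ ‖x - xb‖ ^ 2 := sq_nonneg _
  have h2 : (1/2) * ‖p - xb‖ * ‖x - xb‖ ^ 2 ≤ (1/2) * ρ * ‖x - xb‖ ^ 2 := by
    nlinarith [norm_nonneg (p - xb)]
  rw [key]
  have h3 : r * ⟪p - xb, x - xb⟫ ≤ (1/2) * ρ * ‖x - xb‖ ^ 2 := hprx.trans h2
  have hi2 : 2 * ⟪p - xb, x - xb⟫ ≤ ρ / r * ‖x - xb‖ ^ 2 := by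
    rw [div_mul_eq_mul_div, le_div_iff₀ hr]
    nlinarith
  linarith
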